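/- arXiv:1904.03044 — 4 statements merged into one kernel-verified Lean document; each statement's English description precedes it below -/
import Mathlib

section
/- Suppose κ ∈ End(ℂ^d) is invertible and satisfies C^{(11)}·(κ⊗κ) = (κ⊗κ)·C^{(22)} and (κ⊗1)·C^{(21)}·(1⊗κ) = (1⊗κ)·C^{(12)}·(κ⊗1). Then there exists a Lie algebra involution α : 𝔤 → 𝔤 (a Lie algebra automorphism with α ∘ α = id_𝔤) such that κ·ρ⁽²⁾(X)·κ⁻¹ = ρ⁽¹⁾(α(X)) for all X ∈ 𝔤. -/
/-!
Put σ X = κ ρ⁽²⁾(X) κ⁻¹, a representation with trace form c⁽²⁾ B. The first constraint says that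
ρ⁽¹⁾ and σ have the same Casimir tensor; taking the partial trace of that tensor against σ(Y)
exhibits c⁽²⁾ σ(Y) as ρ⁽¹⁾ of an element, so σ = ρ⁽¹⁾ ∘ α for a Lie algebra map α, as ρ⁽¹⁾ is
injective. The second constraint says that the mixed Casimir tensors of (σ, ρ⁽¹⁾) and (ρ⁽¹⁾, σ)
agree; the partial trace against ρ⁽¹⁾(Y) shows that α is B-self-adjoint, while comparing trace
forms gives B(αX, αY) = (c⁽²⁾/c⁽¹⁾) B(X, Y). Hence α² = (c⁽²⁾/c⁽¹⁾) id, and as α preserves the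
brackets of the non-abelian algebra 𝔤, c⁽²⁾/c⁽¹⁾ = 1.
-/

open Kronecker

attribute [local instance 100] LieRing.ofAssociativeRing

namespace Matrix

section traceRight

variable {R ι m m' n : Type*} [CommSemiring R] [Fintype n]

def traceRight (M : Matrix (m × n) (m' × n) R) : Matrix m m' R :=
  of fun i j => ∑ k, M (i, k) (j, k)

lemma traceRight_kronecker (A : Matrix m m' R) (B : Matrix n n R) :
    traceRight (A ⊗ₖ B) = B.trace • A := by
  ext i j
  simp [traceRight, trace, Finset.mul_sum, mul_comm]

lemma traceRight_sum (s : Finset ι) (f : ι → Matrix (m × n) (m' × n) R) :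
    traceRight (∑ i ∈ s, f i) = ∑ i ∈ s, traceRight (f i) := by
  ext i j
  simp only [traceRight, of_apply, sum_apply]
  exact Finset.sum_comm

lemma traceRight_sum_kronecker_mul_one_kronecker [Fintype m'] [DecidableEq m'] (s : Finset ι)
    (P : ι → Matrix m m' R) (Q : ι → Matrix n n R) (M : Matrix n n R) :
    traceRight ((∑ i ∈ s, P i ⊗ₖ Q i) * ((1 : Matrix m' m' R) ⊗ₖ M)) =
      ∑ i ∈ s, (Q i * M).trace • P i := by
  simp only [Matrix.sum_mul, ← mul_kronecker_mul, Matrix.mul_one, traceRight_sum,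
    traceRight_kronecker]

end traceRight

lemma kronecker_mul_sum_kronecker_mul {R ι l l' m m' n n' p p' : Type*} [CommSemiring R]
    [Fintype m] [Fintype m'] [Fintype n] [Fintype n'] (s : Finset ι)
    (P : Matrix l m R) (P' : Matrix l' m' R) (f : ι → Matrix m n R) (g : ι → Matrix m' n' R)
    (Q : Matrix n p R) (Q' : Matrix n' p' R) :
    (P ⊗ₖ P') * (∑ i ∈ s, f i ⊗ₖ g i) * (Q ⊗ₖ Q') = ∑ i ∈ s, (P * f i * Q) ⊗ₖ (P' * g i * Q') := by
  simp only [Matrix.mul_sum, Matrix.sum_mul, ← mul_kronecker_mul]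

end Matrix

namespace Module.Basis

variable {R M ι : Type*} [CommSemiring R] [AddCommMonoid M] [Module R M] [Fintype ι]
  [DecidableEq ι] {B : LinearMap.BilinForm R M} {b : Basis ι R M} {e : ι → M}

lemma repr_eq_of_dual (hbe : ∀ i j, B (b i) (e j) = if i = j then 1 else 0) (x : M) (i : ι) :
    b.repr x i = B x (e i) := by
  conv_rhs => rw [← b.sum_repr x]
  simp only [map_sum, map_smul, LinearMap.sum_apply, LinearMap.smul_apply, hbe, smul_eq_mul,
    mul_ite, mul_one, mul_zero, Finset.sum_ite_eq', Finset.mem_univ, if_true]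

lemma sum_smul_of_dual (hbe : ∀ i j, B (b i) (e j) = if i = j then 1 else 0) (x : M) :
    ∑ i, B x (e i) • b i = x := by
  simp_rw [← b.repr_eq_of_dual hbe]
  exact b.sum_repr x

end Module.Basis

open Matrix

/-- For `e` the `B`-dual family of the basis `b`, `casimir b e ρ⁽ⁱ⁾ ρ⁽ʲ⁾` is `C^{(ij)}`. -/
def casimir {R M ι m n : Type*} [CommSemiring R] [Fintype ι] (b e : ι → M)
    (σ : M → Matrix m m R) (τ : M → Matrix n n R) : Matrix (m × n) (m × n) R :=
  ∑ i, σ (b i) ⊗ₖ τ (e i)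

section casimir

variable {R M ι m n : Type*} [CommRing R] [AddCommGroup M] [Module R M] [Fintype ι]
  [Fintype m] [DecidableEq m] [Fintype n]

lemma traceRight_casimir_mul_one_kronecker {F : Type*} [FunLike F M (Matrix m m R)]
    [LinearMapClass F R M (Matrix m m R)] (b e : ι → M) (σ : F) (τ : M → Matrix n n R)
    (N : Matrix n n R) :
    traceRight (casimir b e σ τ * ((1 : Matrix m m R) ⊗ₖ N)) =
      σ (∑ i, (τ (e i) * N).trace • b i) := by
  rw [casimir, traceRight_sum_kronecker_mul_one_kronecker]
  simp [map_sum]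

lemma traceRight_casimir_mul_one_kronecker_of_traceForm [DecidableEq ι] {F G : Type*}
    [FunLike F M (Matrix m m R)] [LinearMapClass F R M (Matrix m m R)]
    [FunLike G M (Matrix n n R)] [LinearMapClass G R M (Matrix n n R)]
    {B : LinearMap.BilinForm R M} {b : Module.Basis ι R M} {e : ι → M}
    (hbe : ∀ i j, B (b i) (e j) = if i = j then 1 else 0) (σ : F) (ρ : G) {c : R}
    (hρ : ∀ X Y, (ρ X * ρ Y).trace = c * B X Y) (Y : M) :
    traceRight (casimir b e σ ρ * ((1 : Matrix m m R) ⊗ₖ ρ Y)) = c • σ Y := by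
  rw [traceRight_casimir_mul_one_kronecker]
  simp_rw [trace_mul_comm (ρ (e _)) (ρ Y), hρ, mul_smul, ← Finset.smul_sum,
    b.sum_smul_of_dual hbe, map_smul]

end casimir

section conj

variable {R M ι n : Type*} [CommRing R] [Fintype ι] [Fintype n] [DecidableEq n] {b e : ι → M}
  {ρ₁ ρ₂ σ : M → Matrix n n R} {κ : Matrix n n R}

lemma casimir_eq_of_mul_kronecker_eq (hκ : IsUnit κ) (hσ : ∀ X, σ X = κ * ρ₂ X * κ⁻¹)
    (h : casimir b e ρ₁ ρ₁ * (κ ⊗ₖ κ) = (κ ⊗ₖ κ) * casimir b e ρ₂ ρ₂) :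
    casimir b e ρ₁ ρ₁ = casimir b e σ σ := by
  have hdet := (isUnit_iff_isUnit_det κ).mp hκ
  calc casimir b e ρ₁ ρ₁ = casimir b e ρ₁ ρ₁ * (κ ⊗ₖ κ) * (κ⁻¹ ⊗ₖ κ⁻¹) := by
        rw [Matrix.mul_assoc, ← mul_kronecker_mul, mul_nonsing_inv _ hdet, one_kronecker_one,
          Matrix.mul_one]
    _ = casimir b e σ σ := by
        rw [h]
        simp only [casimir, kronecker_mul_sum_kronecker_mul, hσ]

lemma casimir_comm_of_mul_kronecker_eq (hκ : IsUnit κ) (hσ : ∀ X, σ X = κ * ρ₂ X * κ⁻¹)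
    (h : (κ ⊗ₖ 1) * casimir b e ρ₂ ρ₁ * (1 ⊗ₖ κ) = (1 ⊗ₖ κ) * casimir b e ρ₁ ρ₂ * (κ ⊗ₖ 1)) :
    casimir b e σ ρ₁ = casimir b e ρ₁ σ := by
  have hdet := (isUnit_iff_isUnit_det κ).mp hκ
  calc casimir b e σ ρ₁ = (κ ⊗ₖ 1) * casimir b e ρ₂ ρ₁ * (1 ⊗ₖ κ) * (κ⁻¹ ⊗ₖ κ⁻¹) := by
        rw [Matrix.mul_assoc _ (1 ⊗ₖ κ), ← mul_kronecker_mul, Matrix.one_mul,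
          mul_nonsing_inv _ hdet]
        simp only [casimir, kronecker_mul_sum_kronecker_mul, hσ, Matrix.mul_one, Matrix.one_mul]
    _ = (1 ⊗ₖ κ) * casimir b e ρ₁ ρ₂ * (κ ⊗ₖ 1) * (κ⁻¹ ⊗ₖ κ⁻¹) := by rw [h]
    _ = casimir b e ρ₁ σ := by
        rw [Matrix.mul_assoc _ (κ ⊗ₖ 1), ← mul_kronecker_mul, Matrix.one_mul,
          mul_nonsing_inv _ hdet]
        simp only [casimir, kronecker_mul_sum_kronecker_mul, hσ, Matrix.mul_one, Matrix.one_mul]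

end conj

lemma LieHom.exists_comp_eq_of_range_le {R L L₁ L₂ : Type*} [CommRing R] [LieRing L]
    [LieAlgebra R L] [LieRing L₁] [LieAlgebra R L₁] [LieRing L₂] [LieAlgebra R L₂]
    {f : L →ₗ⁅R⁆ L₂} (hf : Function.Injective f) {g : L₁ →ₗ⁅R⁆ L₂} (h : g.range ≤ f.range) :
    ∃ α : L₁ →ₗ⁅R⁆ L, ∀ x, f (α x) = g x := by
  refine ⟨(LieEquiv.ofInjective f hf).symm.toLieHom.comp
    ((LieSubalgebra.inclusion h).comp g.rangeRestrict), fun x => ?_⟩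
  rw [LieHom.comp_apply, LieEquiv.coe_toLieHom, ← LieEquiv.ofInjective_apply f hf,
    LieEquiv.apply_symm_apply]
  rfl

lemma LieHom.eq_one_of_apply_apply_eq_smul {K L : Type*} [Field K] [LieRing L] [LieAlgebra K L]
    (hL : ¬IsLieAbelian L) (α : L →ₗ⁅K⁆ L) {t : K} (ht : t ≠ 0) (h : ∀ X, α (α X) = t • X) :
    t = 1 := by
  obtain ⟨X, Y, hXY⟩ : ∃ X Y : L, ⁅X, Y⁆ ≠ 0 := by
    by_contra! hab
    exact hL ⟨hab⟩
  have hsq : t • ⁅X, Y⁆ = (t * t) • ⁅X, Y⁆ :=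
    calc t • ⁅X, Y⁆ = α (α ⁅X, Y⁆) := (h _).symm
      _ = ⁅t • X, t • Y⁆ := by rw [LieHom.map_lie, LieHom.map_lie, h, h]
      _ = (t * t) • ⁅X, Y⁆ := by rw [smul_lie, lie_smul, smul_smul]
  have : (t * t - t) • ⁅X, Y⁆ = 0 := by rw [sub_smul, ← hsq, sub_self]
  have htt : t * (t - 1) = 0 := by
    rw [mul_sub, mul_one]
    exact (smul_eq_zero.mp this).resolve_right hXY
  exact sub_eq_zero.mp ((mul_eq_zero.mp htt).resolve_left ht)

lemma LieHom.exists_conj_apply {R L n : Type*} [CommRing R] [LieRing L] [LieAlgebra R L]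
    [Fintype n] [DecidableEq n] {κ : Matrix n n R} (hκ : IsUnit κ) (ρ : L →ₗ⁅R⁆ Matrix n n R) :
    ∃ σ : L →ₗ⁅R⁆ Matrix n n R, ∀ X, σ X = κ * ρ X * κ⁻¹ := by
  refine ⟨(MulSemiringAction.toAlgEquiv R _ (ConjAct.toConjAct hκ.unit)).toLieEquiv.toLieHom.comp ρ,
    fun X => ?_⟩
  simp [ConjAct.units_smul_def]

section casimirLie

variable {K L ι n : Type*} [Field K] [LieRing L] [LieAlgebra K L] [Fintype ι] [DecidableEq ι]
  [Fintype n] [DecidableEq n] {B : LinearMap.BilinForm K L} {b : Module.Basis ι K L} {e : ι → L}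
  {ρ σ : L →ₗ⁅K⁆ Matrix n n K} {c₁ c₂ : K}

lemma exists_lieHom_comp_eq_of_casimir_eq (hbe : ∀ i j, B (b i) (e j) = if i = j then 1 else 0)
    (hρ : Function.Injective ρ) (hσ : ∀ X Y, (σ X * σ Y).trace = c₂ * B X Y) (hc₂ : c₂ ≠ 0)
    (h : casimir b e ρ ρ = casimir b e σ σ) :
    ∃ α : L →ₗ⁅K⁆ L, ∀ X, ρ (α X) = σ X := by
  refine LieHom.exists_comp_eq_of_range_le hρ ?_
  rintro _ ⟨Y, rfl⟩
  have key := traceRight_casimir_mul_one_kronecker_of_traceForm hbe σ σ hσ Y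
  rw [← h, traceRight_casimir_mul_one_kronecker] at key
  rw [LieHom.mem_range]
  exact ⟨c₂⁻¹ • _, by rw [map_smul, key, inv_smul_smul₀ hc₂]; rfl⟩

lemma apply_eq_sum_of_casimir_comm (hbe : ∀ i j, B (b i) (e j) = if i = j then 1 else 0)
    (hρ : Function.Injective ρ) (hρB : ∀ X Y, (ρ X * ρ Y).trace = c₁ * B X Y) (hc₁ : c₁ ≠ 0)
    {α : L →ₗ⁅K⁆ L} (hα : ∀ X, ρ (α X) = σ X) (h : casimir b e σ ρ = casimir b e ρ σ) (Y : L) :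
    α Y = ∑ i, B (α (e i)) Y • b i := by
  apply hρ
  apply smul_right_injective _ hc₁
  calc c₁ • ρ (α Y) = traceRight (casimir b e σ ρ * (1 ⊗ₖ ρ Y)) := by
        rw [hα, traceRight_casimir_mul_one_kronecker_of_traceForm hbe σ ρ hρB]
    _ = ρ (∑ i, (ρ (α (e i)) * ρ Y).trace • b i) := by
        rw [h, traceRight_casimir_mul_one_kronecker]
        simp_rw [hα]
    _ = c₁ • ρ (∑ i, B (α (e i)) Y • b i) := by
        simp_rw [hρB, mul_smul, ← Finset.smul_sum, map_smul]

lemma traceForm_apply_apply_of_comp_eq (hρB : ∀ X Y, (ρ X * ρ Y).trace = c₁ * B X Y)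
    (hσB : ∀ X Y, (σ X * σ Y).trace = c₂ * B X Y) (hc₁ : c₁ ≠ 0) {α : L →ₗ⁅K⁆ L}
    (hα : ∀ X, ρ (α X) = σ X) (X Y : L) :
    B (α X) (α Y) = (c₂ / c₁) * B X Y := by
  rw [div_mul_eq_mul_div, eq_div_iff hc₁, mul_comm, ← hρB, hα, hα, hσB]

theorem exists_involution_of_casimir_eq (hbe : ∀ i j, B (b i) (e j) = if i = j then 1 else 0)
    (hB : B.IsSymm) (hL : ¬IsLieAbelian L) (hρ : Function.Injective ρ)
    (hρB : ∀ X Y, (ρ X * ρ Y).trace = c₁ * B X Y) (hσB : ∀ X Y, (σ X * σ Y).trace = c₂ * B X Y)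
    (hc₁ : c₁ ≠ 0) (hc₂ : c₂ ≠ 0) (h₁ : casimir b e ρ ρ = casimir b e σ σ)
    (h₂ : casimir b e σ ρ = casimir b e ρ σ) :
    ∃ α : L →ₗ⁅K⁆ L, (∀ X, α (α X) = X) ∧ ∀ X, σ X = ρ (α X) := by
  obtain ⟨α, hα⟩ := exists_lieHom_comp_eq_of_casimir_eq hbe hρ hσB hc₂ h₁
  have hsq (Y : L) : α (α Y) = (c₂ / c₁) • Y := by
    rw [apply_eq_sum_of_casimir_comm hbe hρ hρB hc₁ hα h₂]
    simp_rw [traceForm_apply_apply_of_comp_eq hρB hσB hc₁ hα, hB.eq (e _) Y, mul_smul,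
      ← Finset.smul_sum, b.sum_smul_of_dual hbe]
  have ht : c₂ / c₁ = 1 := LieHom.eq_one_of_apply_apply_eq_smul hL α (div_ne_zero hc₂ hc₁) hsq
  exact ⟨α, fun X => by rw [hsq, ht, one_smul], fun X => (hα X).symm⟩

end casimirLie

theorem stmt_5_general {L : Type*} [LieRing L] [LieAlgebra ℂ L] [FiniteDimensional ℂ L]
    [LieAlgebra.IsSimple ℂ L]
    {d : ℕ} (ρ₁ ρ₂ : L →ₗ⁅ℂ⁆ Matrix (Fin d) (Fin d) ℂ)
    (hρ₁ : Function.Injective ρ₁)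
    (c₁ c₂ : ℂ) (hc₁ : c₁ ≠ 0) (hc₂ : c₂ ≠ 0)
    (htr₁ : ∀ X Y : L, Matrix.trace (ρ₁ X * ρ₁ Y) = c₁ * killingForm ℂ L X Y)
    (htr₂ : ∀ X Y : L, Matrix.trace (ρ₂ X * ρ₂ Y) = c₂ * killingForm ℂ L X Y)
    {ι : Type*} [Fintype ι] [DecidableEq ι] (Xb : Module.Basis ι ℂ L) (Xd : ι → L)
    (hdual : ∀ A B : ι, killingForm ℂ L (Xb A) (Xd B) = if A = B then 1 else 0)
    (κ : Matrix (Fin d) (Fin d) ℂ) (hκ : IsUnit κ)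
    (hcbYBE₁ : (∑ A : ι, ρ₁ (Xb A) ⊗ₖ ρ₁ (Xd A)) * (κ ⊗ₖ κ) =
        (κ ⊗ₖ κ) * (∑ A : ι, ρ₂ (Xb A) ⊗ₖ ρ₂ (Xd A)))
    (hcbYBE₂ : (κ ⊗ₖ (1 : Matrix (Fin d) (Fin d) ℂ)) *
          (∑ A : ι, ρ₂ (Xb A) ⊗ₖ ρ₁ (Xd A)) * ((1 : Matrix (Fin d) (Fin d) ℂ) ⊗ₖ κ) =
        ((1 : Matrix (Fin d) (Fin d) ℂ) ⊗ₖ κ) *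
          (∑ A : ι, ρ₁ (Xb A) ⊗ₖ ρ₂ (Xd A)) * (κ ⊗ₖ (1 : Matrix (Fin d) (Fin d) ℂ))) :
    ∃ α : L →ₗ⁅ℂ⁆ L, (∀ X : L, α (α X) = X) ∧
      (∀ X : L, κ * ρ₂ X * κ⁻¹ = ρ₁ (α X)) := by
  have hdet := (isUnit_iff_isUnit_det κ).mp hκ
  obtain ⟨σ, hσ⟩ := LieHom.exists_conj_apply hκ ρ₂
  have hσB (X Y : L) : (σ X * σ Y).trace = c₂ * killingForm ℂ L X Y := by
    rw [hσ, hσ, ← htr₂, ← trace_conj hκ (ρ₂ X * ρ₂ Y)]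
    simp only [Matrix.mul_assoc, nonsing_inv_mul_cancel_left _ _ hdet]
  obtain ⟨α, hinv, hα⟩ := exists_involution_of_casimir_eq hdual ⟨LieModule.traceForm_comm ℂ L L⟩
    (LieAlgebra.IsSimple.non_abelian ℂ) hρ₁ htr₁ hσB hc₁ hc₂
    (casimir_eq_of_mul_kronecker_eq hκ hσ hcbYBE₁) (casimir_comm_of_mul_kronecker_eq hκ hσ hcbYBE₂)
  exact ⟨α, hinv, fun X => (hσ X).symm.trans (hα X)⟩

/-- if `κ` is invertible and satisfies both classical bYBE constraints, then
there is a Lie algebra involution `α` of `𝔤` with `κρ⁽²⁾(X)κ⁻¹ = ρ⁽¹⁾(α(X))` for all `X`. -/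
theorem stmt_5 {L : Type*} [LieRing L] [LieAlgebra ℂ L] [FiniteDimensional ℂ L]
    [LieAlgebra.IsSimple ℂ L]
    (hB : LinearMap.BilinForm.Nondegenerate (killingForm ℂ L))
    {d : ℕ} (ρ₁ ρ₂ : L →ₗ⁅ℂ⁆ Matrix (Fin d) (Fin d) ℂ)
    (hρ₁ : Function.Injective ρ₁) (hρ₂ : Function.Injective ρ₂)
    (c₁ c₂ : ℂ) (hc₁ : c₁ ≠ 0) (hc₂ : c₂ ≠ 0)
    (htr₁ : ∀ X Y : L, Matrix.trace (ρ₁ X * ρ₁ Y) = c₁ * killingForm ℂ L X Y)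
    (htr₂ : ∀ X Y : L, Matrix.trace (ρ₂ X * ρ₂ Y) = c₂ * killingForm ℂ L X Y)
    {ι : Type*} [Fintype ι] [DecidableEq ι] (Xb : Module.Basis ι ℂ L) (Xd : ι → L)
    (hdual : ∀ A B : ι, killingForm ℂ L (Xb A) (Xd B) = if A = B then 1 else 0)
    (κ : Matrix (Fin d) (Fin d) ℂ) (hκ : IsUnit κ)
    (hcbYBE₁ : (∑ A : ι, ρ₁ (Xb A) ⊗ₖ ρ₁ (Xd A)) * (κ ⊗ₖ κ) =
        (κ ⊗ₖ κ) * (∑ A : ι, ρ₂ (Xb A) ⊗ₖ ρ₂ (Xd A)))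
    (hcbYBE₂ : (κ ⊗ₖ (1 : Matrix (Fin d) (Fin d) ℂ)) *
          (∑ A : ι, ρ₂ (Xb A) ⊗ₖ ρ₁ (Xd A)) * ((1 : Matrix (Fin d) (Fin d) ℂ) ⊗ₖ κ) =
        ((1 : Matrix (Fin d) (Fin d) ℂ) ⊗ₖ κ) *
          (∑ A : ι, ρ₁ (Xb A) ⊗ₖ ρ₂ (Xd A)) * (κ ⊗ₖ (1 : Matrix (Fin d) (Fin d) ℂ))) :
    ∃ α : L →ₗ⁅ℂ⁆ L, (∀ X : L, α (α X) = X) ∧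
      (∀ X : L, κ * ρ₂ X * κ⁻¹ = ρ₁ (α X)) :=
  stmt_5_general ρ₁ ρ₂ hρ₁ c₁ c₂ hc₁ hc₂ htr₁ htr₂ Xb Xd hdual κ hκ hcbYBE₁ hcbYBE₂
end

section
/- Suppose the maps R^{(ij)} : ℂ → End(ℂ^d⊗ℂ^d) and K : ℂ → End(ℂ^d) satisfy the boundary Yang–Baxter equation for all u,v ∈ ℂ and the quasi-classical asymptotics with invertible leading term κ. Then for every fixed u ∈ ℂ: Σ_A (K(u)·ρ⁽²⁾(X_A) − ρ⁽¹⁾(X_A)·K(u)) ⊗ (ρ⁽¹⁾(X^A) + κ·ρ⁽²⁾(X^A)·κ⁻¹) = 0 in End(ℂ^d ⊗ ℂ^d). -/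
open Kronecker

attribute [local instance 100] LieRing.ofAssociativeRing

/-- The flip operator `P` on `ℂ^d ⊗ ℂ^d`, `P(x ⊗ y) = y ⊗ x`, as a matrix. -/
def matFlip (d : ℕ) : Matrix (Fin d × Fin d) (Fin d × Fin d) ℂ :=
  fun p q => if p.1 = q.2 ∧ p.2 = q.1 then 1 else 0

/-- Entrywise big-O bound `‖f(u)‖ = O(g(‖u‖))` as `‖u‖ → ∞`. -/
def AsympO {m : Type*} (f : ℂ → Matrix m m ℂ) (g : ℝ → ℝ) : Prop :=
  ∃ c r : ℝ, ∀ u : ℂ, r ≤ ‖u‖ → ∀ p q, ‖f u p q‖ ≤ c * g ‖u‖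

/-!
Fix `u` and let `v → ∞` in the boundary Yang–Baxter equation. All `R`-factors are
`1 + O(v⁻¹)` and `K₂(v) → κ₂`; the zeroth-order terms agree, and the error `K₂(v) - κ₂` only
contributes at order `v⁻²` because `K₂(v)` and `κ₂` commute with `K₁(u)`. Comparing the
`v⁻¹`-coefficients gives
`(-C⁽¹¹⁾K₁ + K₁ P C⁽¹²⁾ P) κ₂ = κ₂ (C⁽¹²⁾ K₁ - K₁ P C⁽²²⁾ P)`.
Since the Killing form is symmetric, `P C⁽ⁱʲ⁾ P = Σ_A ρ⁽ʲ⁾(X_A) ⊗ ρ⁽ⁱ⁾(X^A)`, and the relation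
becomes the claimed identity multiplied on the right by the invertible matrix `1 ⊗ κ`.
-/

open Filter Asymptotics Bornology

attribute [local instance] Matrix.linftyOpNormedRing Matrix.linftyOpNormedAlgebra

section InvExpansion

variable {E : Type*} [NormedRing E] [NormedAlgebra ℂ E]

def HasInvExpansion (f : ℂ → E) (F₀ F₁ : E) : Prop :=
  (fun v => f v - F₀ - v⁻¹ • F₁) =O[cobounded ℂ] fun v => v⁻¹ ^ 2

lemma isBigO_inv_sq_inv : (fun v : ℂ => v⁻¹ ^ 2) =O[cobounded ℂ] fun v => v⁻¹ := by
  simpa [pow_two] using (isBigO_refl (fun v : ℂ => v⁻¹) _).mul (tendsto_inv₀_cobounded.isBigO_one ℂ)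

lemma isBigO_inv_const_add (u : ℂ) : (fun v : ℂ => (u + v)⁻¹) =O[cobounded ℂ] fun v => v⁻¹ := by
  refine IsBigO.of_bound 2 ?_
  filter_upwards [eventually_cobounded_le_norm (2 * ‖u‖), eventually_ne_cobounded 0] with v hv hv0
  have hv' : 0 < ‖v‖ := norm_pos_iff.mpr hv0
  have : ‖v‖ ≤ ‖u + v‖ + ‖u‖ := by simpa using norm_sub_le (u + v) u
  rw [norm_inv, norm_inv, ← div_eq_mul_inv, inv_le_comm₀ (by linarith) (by positivity), inv_div]
  linarith

lemma isBigO_inv_const_add_sub_inv (u : ℂ) :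
    (fun v : ℂ => (u + v)⁻¹ - v⁻¹) =O[cobounded ℂ] fun v => v⁻¹ ^ 2 := by
  have h := (((isBigO_inv_const_add u).mul (isBigO_refl (fun v : ℂ => v⁻¹) _)).const_mul_left (-u))
  refine h.congr' ?_ (Eventually.of_forall fun v => by ring)
  filter_upwards [eventually_ne_cobounded 0, eventually_ne_cobounded (-u)] with v hv0 hvu
  have : u + v ≠ 0 := fun h => hvu (by linear_combination h)
  field_simp
  ring

lemma hasInvExpansion_const (A : E) : HasInvExpansion (fun _ => A) A 0 := by
  simp only [HasInvExpansion, sub_self, smul_zero]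
  exact isBigO_zero _ _

namespace HasInvExpansion

variable {f g : ℂ → E} {F₀ F₁ G₀ G₁ : E}

lemma isBigO_sub (h : HasInvExpansion f F₀ F₁) :
    (fun v => f v - F₀) =O[cobounded ℂ] fun v => v⁻¹ := by
  have hF : (fun v : ℂ => v⁻¹ • F₁) =O[cobounded ℂ] fun v => v⁻¹ :=
    IsBigO.of_bound ‖F₁‖ (Eventually.of_forall fun v => by rw [norm_smul, mul_comm])
  simpa using (h.trans isBigO_inv_sq_inv).add hF

lemma isBigO_one (h : HasInvExpansion f F₀ F₁) : f =O[cobounded ℂ] fun _ => (1 : ℂ) := by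
  simpa using (h.isBigO_sub.trans (tendsto_inv₀_cobounded.isBigO_one ℂ)).add
    (isBigO_const_one ℂ F₀ _)

lemma sub (hf : HasInvExpansion f F₀ F₁) (hg : HasInvExpansion g G₀ G₁) :
    HasInvExpansion (fun v => f v - g v) (F₀ - G₀) (F₁ - G₁) :=
  (IsBigO.sub hf hg).congr_left fun v => by simp only [smul_sub]; abel

lemma mul (hf : HasInvExpansion f F₀ F₁) (hg : HasInvExpansion g G₀ G₁) :
    HasInvExpansion (fun v => f v * g v) (F₀ * G₀) (F₀ * G₁ + F₁ * G₀) := by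
  have h₁ := (IsBigO.mul hf hg.isBigO_one).congr_right fun v => mul_one (v⁻¹ ^ 2)
  have h₂ := (isBigO_const_one ℂ F₀ _).mul hg
  have h₃ := (isBigO_refl (fun v : ℂ => v⁻¹) _).smul ((isBigO_const_one ℂ F₁ _).mul hg.isBigO_sub)
  refine ((h₁.add (h₂.congr_right fun v => one_mul (v⁻¹ ^ 2))).add
    (h₃.congr_right fun v => by rw [smul_eq_mul, one_mul, pow_two])).congr_left fun v => ?_
  simp only [sub_mul, mul_sub, smul_mul_assoc, mul_smul_comm, smul_sub, smul_add]
  abel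

lemma const_mul_mul_const (h : HasInvExpansion f F₀ F₁) (A B : E) :
    HasInvExpansion (fun v => A * f v * B) (A * F₀ * B) (A * F₁ * B) := by
  simpa using ((hasInvExpansion_const A).mul h).mul (hasInvExpansion_const B)

lemma mul_const_mul (hf : HasInvExpansion f 1 F₁) (hg : HasInvExpansion g 1 G₁) (K : E) :
    HasInvExpansion (fun v => f v * K * g v) K (F₁ * K + K * G₁) := by
  simpa [add_comm] using (hf.mul (hasInvExpansion_const K)).mul hg

lemma comp_neg (h : HasInvExpansion f F₀ F₁) : HasInvExpansion (fun v => f (-v)) F₀ (-F₁) := by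
  have := IsBigO.comp_tendsto h tendsto_neg_cobounded
  simpa [HasInvExpansion, Function.comp_def, inv_neg, neg_sq, sub_eq_add_neg] using this

lemma comp_const_add (h : HasInvExpansion f F₀ F₁) (u : ℂ) :
    HasInvExpansion (fun v => f (u + v)) F₀ F₁ := by
  have h₁ := IsBigO.comp_tendsto h (tendsto_const_add_cobounded u)
  have h₂ := (isBigO_inv_const_add u).pow 2
  have h₃ := (isBigO_inv_const_add_sub_inv u).smul (isBigO_const_one ℂ F₁ _)
  refine ((h₁.trans h₂).add (h₃.congr_right fun v => mul_one _)).congr_left fun v => ?_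
  simp only [Function.comp_apply, sub_smul]
  abel

lemma comp_const_sub (h : HasInvExpansion f F₀ F₁) (u : ℂ) :
    HasInvExpansion (fun v => f (u - v)) F₀ (-F₁) := by
  simpa only [sub_eq_add_neg] using (h.comp_const_add u).comp_neg

lemma eq_zero_of_isBigO (h : HasInvExpansion f 0 F₁)
    (hf : f =O[cobounded ℂ] fun v => v⁻¹ ^ 2) : F₁ = 0 := by
  have h₁ : (fun v : ℂ => v⁻¹ • F₁) =O[cobounded ℂ] fun v => v⁻¹ ^ 2 :=
    (IsBigO.sub hf h).congr_left fun v => by abel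
  have h₂ : (fun _ : ℂ => F₁) =O[cobounded ℂ] fun v : ℂ => v⁻¹ := by
    refine ((isBigO_refl (fun v : ℂ => v) _).smul h₁).congr' ?_ ?_
    · filter_upwards [eventually_ne_cobounded 0] with v hv
      rw [smul_smul, mul_inv_cancel₀ hv, one_smul]
    · filter_upwards [eventually_ne_cobounded 0] with v hv
      rw [smul_eq_mul, pow_two, ← mul_assoc, mul_inv_cancel₀ hv, one_mul]
  exact tendsto_nhds_unique tendsto_const_nhds (h₂.trans_tendsto tendsto_inv₀_cobounded)

lemma coeff_mul_eq_mul_coeff {w : ℂ → E} {K W : E} (hf : HasInvExpansion f K F₁)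
    (hg : HasInvExpansion g K G₁) (hw : (fun v => w v - W) =O[cobounded ℂ] fun v => v⁻¹)
    (hwK : ∀ v, Commute (w v) K) (hWK : Commute W K) (hfg : ∀ v, f v * w v = w v * g v) :
    F₁ * W = W * G₁ := by
  -- `f w = w g` and commutation with `K` give `f W - W g = (w - W)(g - K) - (f - K)(w - W)`
  have hsmall : (fun v => f v * W - W * g v) =O[cobounded ℂ] fun v => v⁻¹ ^ 2 := by
    refine ((hw.mul hg.isBigO_sub).sub (hf.isBigO_sub.mul hw)).congr (fun v => ?_) fun v => ?_
    · simp only [sub_mul, mul_sub, hfg v, (hwK v).eq, hWK.eq]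
      abel
    · rw [pow_two]
  have hexp := (hf.mul (hasInvExpansion_const W)).sub ((hasInvExpansion_const W).mul hg)
  rw [hWK.eq, sub_self, mul_zero, zero_add, zero_mul, add_zero] at hexp
  exact sub_eq_zero.mp (hexp.eq_zero_of_isBigO hsmall)

end HasInvExpansion
end InvExpansion

section DualBasis

variable {R L M ι : Type*} [CommRing R] [AddCommGroup L] [Module R L] [AddCommGroup M]
  [Module R M] [Fintype ι] [DecidableEq ι] {B : LinearMap.BilinForm R L} (hB : B.IsSymm)
  {Xb : Module.Basis ι R L} {Xd : ι → L}
  (hdual : ∀ A A', B (Xb A) (Xd A') = if A = A' then 1 else 0)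
include hB hdual

lemma eq_sum_bilinForm_smul_of_dual (A : ι) : Xd A = ∑ A', B (Xd A') (Xd A) • Xb A' := by
  conv_lhs => rw [← Xb.sum_repr (Xd A)]
  refine Finset.sum_congr rfl fun A' _ => ?_
  conv_rhs => rw [← Xb.sum_repr (Xd A)]
  simp only [map_sum, map_smul, smul_eq_mul]
  simp [hB.eq (Xd A'), hdual]

lemma sum_apply_dual_basis_comm (β : L →ₗ[R] L →ₗ[R] M) :
    ∑ A, β (Xd A) (Xb A) = ∑ A, β (Xb A) (Xd A) := by
  have expand : ∀ A, Xd A = ∑ A', B (Xd A') (Xd A) • Xb A' :=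
    eq_sum_bilinForm_smul_of_dual hB hdual
  calc ∑ A, β (Xd A) (Xb A) = ∑ A, ∑ A', B (Xd A') (Xd A) • β (Xb A') (Xb A) := by
        refine Finset.sum_congr rfl fun A _ => ?_
        conv_lhs => rw [expand A]
        simp
    _ = ∑ A, ∑ A', B (Xd A') (Xd A) • β (Xb A) (Xb A') := by
        rw [Finset.sum_comm]
        exact Finset.sum_congr rfl fun A _ => Finset.sum_congr rfl fun A' _ => by rw [hB.eq]
    _ = ∑ A, β (Xb A) (Xd A) := by
        refine Finset.sum_congr rfl fun A _ => ?_
        conv_rhs => rw [expand A]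
        simp

end DualBasis

section Flip
variable {d : ℕ}

lemma matFlip_eq_toMatrix : matFlip d = (Equiv.prodComm (Fin d) (Fin d)).toPEquiv.toMatrix := by
  ext p q
  simp [matFlip, PEquiv.toMatrix_apply, Prod.ext_iff, eq_comm, and_comm]

lemma matFlip_mul_mul_matFlip (M : Matrix (Fin d × Fin d) (Fin d × Fin d) ℂ) :
    matFlip d * M * matFlip d = M.submatrix Prod.swap Prod.swap := by
  rw [matFlip_eq_toMatrix, PEquiv.toMatrix_toPEquiv_mul, PEquiv.mul_toMatrix_toPEquiv]
  rfl

lemma matFlip_mul_one_mul_matFlip : matFlip d * 1 * matFlip d = 1 := by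
  rw [matFlip_mul_mul_matFlip]
  exact Matrix.submatrix_one_equiv (Equiv.prodComm _ _)

lemma matFlip_mul_kronecker_mul_matFlip (X Y : Matrix (Fin d) (Fin d) ℂ) :
    matFlip d * (X ⊗ₖ Y) * matFlip d = Y ⊗ₖ X := by
  rw [matFlip_mul_mul_matFlip]
  ext p q
  simp [mul_comm]

lemma matFlip_mul_sum_kronecker_mul_matFlip {ι : Type*} [Fintype ι]
    (X Y : ι → Matrix (Fin d) (Fin d) ℂ) :
    matFlip d * (∑ A, X A ⊗ₖ Y A) * matFlip d = ∑ A, Y A ⊗ₖ X A := by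
  simp only [Finset.mul_sum, Finset.sum_mul, matFlip_mul_kronecker_mul_matFlip]

lemma matFlip_mul_sum_kronecker_dual_mul_matFlip {L ι : Type*} [AddCommGroup L] [Module ℂ L]
    [Fintype ι] [DecidableEq ι] {B : LinearMap.BilinForm ℂ L} (hB : B.IsSymm)
    {Xb : Module.Basis ι ℂ L} {Xd : ι → L}
    (hdual : ∀ A A', B (Xb A) (Xd A') = if A = A' then 1 else 0)
    (Φ Ψ : L →ₗ[ℂ] Matrix (Fin d) (Fin d) ℂ) :
    matFlip d * (∑ A, Φ (Xb A) ⊗ₖ Ψ (Xd A)) * matFlip d = ∑ A, Ψ (Xb A) ⊗ₖ Φ (Xd A) := by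
  rw [matFlip_mul_sum_kronecker_mul_matFlip]
  exact sum_apply_dual_basis_comm hB hdual ((Matrix.kroneckerBilinear (R := ℂ)).compl₁₂ Ψ Φ)

end Flip

section AsympO
variable {m : Type*} [DecidableEq m]

lemma AsympO.one_kronecker {f : ℂ → Matrix m m ℂ} {g : ℝ → ℝ} (h : AsympO f g) :
    AsympO (fun v => (1 : Matrix m m ℂ) ⊗ₖ f v) g := by
  obtain ⟨c, r, h⟩ := h
  refine ⟨c, r, fun v hv ⟨p₁, p₂⟩ ⟨q₁, q₂⟩ => (h v hv p₂ q₂).trans' ?_⟩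
  change ‖((1 : Matrix m m ℂ) ⊗ₖ f v) (p₁, p₂) (q₁, q₂)‖ ≤ _
  rw [Matrix.kronecker_apply, norm_mul, Matrix.one_apply]
  split_ifs <;> simp

variable [Fintype m]

lemma Matrix.linfty_opNorm_le_of_forall_norm_le {A : Matrix m m ℂ} {r : ℝ} (hr : 0 ≤ r)
    (h : ∀ i j, ‖A i j‖ ≤ r) : ‖A‖ ≤ Fintype.card m * r := by
  lift r to NNReal using hr
  rw [Matrix.linfty_opNorm_def]
  exact_mod_cast Finset.sup_le fun i _ => (Finset.sum_le_card_nsmul _ _ r fun j _ => h i j).trans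
    (by simp)

lemma AsympO.isBigO {f : ℂ → Matrix m m ℂ} {g : ℝ → ℝ} (h : AsympO f g) {φ : ℂ → ℂ}
    (hφ : ∀ v, ‖φ v‖ = g ‖v‖) : f =O[cobounded ℂ] φ := by
  obtain ⟨c, r, h⟩ := h
  refine IsBigO.of_bound (Fintype.card m * |c|) ?_
  filter_upwards [eventually_cobounded_le_norm r] with v hv
  rw [mul_assoc]
  refine Matrix.linfty_opNorm_le_of_forall_norm_le (by positivity) fun p q => ?_
  refine (h v hv p q).trans ?_
  rw [← hφ]
  exact mul_le_mul_of_nonneg_right (le_abs_self c) (norm_nonneg _)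

end AsympO

section Kronecker

variable {n : Type*} [Fintype n] [DecidableEq n]

lemma isUnit_one_kronecker {κ : Matrix n n ℂ} (hκ : IsUnit κ) :
    IsUnit ((1 : Matrix n n ℂ) ⊗ₖ κ) := by
  obtain ⟨k, rfl⟩ := hκ
  refine ⟨⟨1 ⊗ₖ k, 1 ⊗ₖ ↑k⁻¹, ?_, ?_⟩, rfl⟩ <;>
    simp [← Matrix.mul_kronecker_mul]

lemma one_kronecker_commute_kronecker_one (X Y : Matrix n n ℂ) :
    Commute ((1 : Matrix n n ℂ) ⊗ₖ X) (Y ⊗ₖ 1) := by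
  simp [Commute, SemiconjBy, ← Matrix.mul_kronecker_mul]

-- The right-hand side is the difference of the two sides of the `v⁻¹`-coefficient of the
-- boundary Yang–Baxter equation.
lemma sum_kronecker_mul_one_kronecker {ι : Type*} [Fintype ι] (a b c e : ι → Matrix n n ℂ)
    (X : Matrix n n ℂ) {κ : Matrix n n ℂ} (hκ : IsUnit κ) :
    (∑ i, (X * c i - a i * X) ⊗ₖ (b i + κ * e i * κ⁻¹)) * (1 ⊗ₖ κ) =
      (-(∑ i, a i ⊗ₖ b i) * (X ⊗ₖ 1) + (X ⊗ₖ 1) * ∑ i, c i ⊗ₖ b i) * (1 ⊗ₖ κ) -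
        (1 ⊗ₖ κ) * ((∑ i, a i ⊗ₖ e i) * (X ⊗ₖ 1) + (X ⊗ₖ 1) * -∑ i, c i ⊗ₖ e i) := by
  have hκκ : κ⁻¹ * κ = 1 := Matrix.nonsing_inv_mul κ ((Matrix.isUnit_iff_isUnit_det κ).mp hκ)
  simp only [neg_mul, mul_neg, add_mul, mul_add, Finset.mul_sum, Finset.sum_mul,
    ← Finset.sum_neg_distrib, ← Finset.sum_add_distrib, ← Finset.sum_sub_distrib,
    ← Matrix.mul_kronecker_mul, one_mul, mul_one, mul_assoc, hκκ]
  refine Finset.sum_congr rfl fun i _ => ?_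
  ext ⟨p₁, p₂⟩ ⟨q₁, q₂⟩
  simp only [Matrix.kronecker_apply, Matrix.sub_apply, Matrix.add_apply, Matrix.neg_apply]
  ring

end Kronecker

theorem stmt_6_general {L : Type*} [LieRing L] [LieAlgebra ℂ L]
    {d : ℕ} (ρ : Fin 2 → L →ₗ⁅ℂ⁆ Matrix (Fin d) (Fin d) ℂ)
    {ι : Type*} [Fintype ι] [DecidableEq ι] (Xb : Module.Basis ι ℂ L) (Xd : ι → L)
    (hdual : ∀ A B : ι, killingForm ℂ L (Xb A) (Xd B) = if A = B then 1 else 0)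
    (C : Fin 2 → Fin 2 → Matrix (Fin d × Fin d) (Fin d × Fin d) ℂ)
    (hC : ∀ i j, C i j = ∑ A : ι, (ρ i) (Xb A) ⊗ₖ (ρ j) (Xd A))
    (R : Fin 2 → Fin 2 → ℂ → Matrix (Fin d × Fin d) (Fin d × Fin d) ℂ)
    (K : ℂ → Matrix (Fin d) (Fin d) ℂ)
    (κ : Matrix (Fin d) (Fin d) ℂ) (hκ : IsUnit κ)
    (hRasymp : ∀ i j, AsympO (fun u => R i j u - 1 - u⁻¹ • C i j) (fun t => (t ^ 2)⁻¹))
    (hKasymp : AsympO (fun u => K u - κ) (fun t => t⁻¹))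
    (hbYBE : ∀ u v : ℂ,
      R 0 0 (u - v) * (K u ⊗ₖ (1 : Matrix (Fin d) (Fin d) ℂ)) *
          (matFlip d * R 0 1 (u + v) * matFlip d) * ((1 : Matrix (Fin d) (Fin d) ℂ) ⊗ₖ K v) =
        ((1 : Matrix (Fin d) (Fin d) ℂ) ⊗ₖ K v) * R 0 1 (u + v) *
          (K u ⊗ₖ (1 : Matrix (Fin d) (Fin d) ℂ)) * (matFlip d * R 1 1 (u - v) * matFlip d)) :
    ∀ u : ℂ, ∑ A : ι, (K u * (ρ 1) (Xb A) - (ρ 0) (Xb A) * K u) ⊗ₖ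
        ((ρ 0) (Xd A) + κ * (ρ 1) (Xd A) * κ⁻¹) = 0 := by
  intro u
  have hR : ∀ i j, HasInvExpansion (R i j) 1 (C i j) := fun i j =>
    (hRasymp i j).isBigO fun v => by rw [norm_pow, norm_inv, inv_pow]
  have hRflip : ∀ i j, HasInvExpansion (fun w => matFlip d * R i j w * matFlip d) 1
      (matFlip d * C i j * matFlip d) := fun i j => by
    simpa only [matFlip_mul_one_mul_matFlip] using
      (hR i j).const_mul_mul_const (matFlip d) (matFlip d)
  have hK : (fun v => 1 ⊗ₖ K v - 1 ⊗ₖ κ) =O[cobounded ℂ] fun v => v⁻¹ :=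
    (hKasymp.one_kronecker.isBigO norm_inv).congr_left fun v =>
      (map_sub (Matrix.kroneckerBilinear (R := ℂ) (1 : Matrix (Fin d) (Fin d) ℂ)) (K v) κ)
  have hCflip : ∀ i j, matFlip d * C i j * matFlip d = ∑ A, ρ j (Xb A) ⊗ₖ ρ i (Xd A) :=
    fun i j => by
      rw [hC]
      exact matFlip_mul_sum_kronecker_dual_mul_matFlip ⟨LieModule.traceForm_comm ℂ L L⟩ hdual
        (ρ i).toLinearMap (ρ j).toLinearMap
  have hfirstOrder := (((hR 0 0).comp_const_sub u).mul_const_mul ((hRflip 0 1).comp_const_add u)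
      (K u ⊗ₖ 1)).coeff_mul_eq_mul_coeff
    (((hR 0 1).comp_const_add u).mul_const_mul ((hRflip 1 1).comp_const_sub u) (K u ⊗ₖ 1)) hK
    (fun v => one_kronecker_commute_kronecker_one _ _) (one_kronecker_commute_kronecker_one _ _)
    (fun v => by rw [hbYBE u v]; simp only [mul_assoc])
  rw [hCflip, hCflip, hC, hC] at hfirstOrder
  rw [← (isUnit_one_kronecker hκ).mul_left_eq_zero, sum_kronecker_mul_one_kronecker _ _ _ _ _ hκ,
    hfirstOrder, sub_self]

/-- if `R^{(ij)}` and `K` satisfy the boundary Yang–Baxter equation and the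
quasi-classical asymptotics with invertible leading term `κ`, then for every fixed `u`,
`Σ_A (K(u)ρ⁽²⁾(X_A) − ρ⁽¹⁾(X_A)K(u)) ⊗ (ρ⁽¹⁾(X^A) + κρ⁽²⁾(X^A)κ⁻¹) = 0`. -/
theorem stmt_6 {L : Type*} [LieRing L] [LieAlgebra ℂ L] [FiniteDimensional ℂ L]
    [LieAlgebra.IsSimple ℂ L]
    (hB : LinearMap.BilinForm.Nondegenerate (killingForm ℂ L))
    {d : ℕ} (ρ : Fin 2 → L →ₗ⁅ℂ⁆ Matrix (Fin d) (Fin d) ℂ)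
    (hρ : ∀ i, Function.Injective (ρ i))
    {ι : Type*} [Fintype ι] [DecidableEq ι] (Xb : Module.Basis ι ℂ L) (Xd : ι → L)
    (hdual : ∀ A B : ι, killingForm ℂ L (Xb A) (Xd B) = if A = B then 1 else 0)
    (C : Fin 2 → Fin 2 → Matrix (Fin d × Fin d) (Fin d × Fin d) ℂ)
    (hC : ∀ i j, C i j = ∑ A : ι, (ρ i) (Xb A) ⊗ₖ (ρ j) (Xd A))
    (R : Fin 2 → Fin 2 → ℂ → Matrix (Fin d × Fin d) (Fin d × Fin d) ℂ)
    (K : ℂ → Matrix (Fin d) (Fin d) ℂ)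
    (κ : Matrix (Fin d) (Fin d) ℂ) (hκ : IsUnit κ)
    (hRasymp : ∀ i j, AsympO (fun u => R i j u - 1 - u⁻¹ • C i j) (fun t => (t ^ 2)⁻¹))
    (hKasymp : AsympO (fun u => K u - κ) (fun t => t⁻¹))
    (hbYBE : ∀ u v : ℂ,
      R 0 0 (u - v) * (K u ⊗ₖ (1 : Matrix (Fin d) (Fin d) ℂ)) *
          (matFlip d * R 0 1 (u + v) * matFlip d) * ((1 : Matrix (Fin d) (Fin d) ℂ) ⊗ₖ K v) =
        ((1 : Matrix (Fin d) (Fin d) ℂ) ⊗ₖ K v) * R 0 1 (u + v) *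
          (K u ⊗ₖ (1 : Matrix (Fin d) (Fin d) ℂ)) * (matFlip d * R 1 1 (u - v) * matFlip d)) :
    ∀ u : ℂ, ∑ A : ι, (K u * (ρ 1) (Xb A) - (ρ 0) (Xb A) * K u) ⊗ₖ
        ((ρ 0) (Xd A) + κ * (ρ 1) (Xd A) * κ⁻¹) = 0 :=
  stmt_6_general ρ Xb Xd hdual C hC R K κ hκ hRasymp hKasymp hbYBE
end

section
/- Let ρ : 𝔤 → End(ℂ^d) be a faithful irreducible representation with Tr(ρ(X)ρ(Y)) = c·B(X,Y), c ≠ 0. If m ∈ End(ℂ^d) satisfies Σ_A ([ρ(X_A), m] ⊗ ρ(X^A) + ρ(X_A) ⊗ [ρ(X^A), m]) = 0 in End(ℂ^d ⊗ ℂ^d), then m ∈ ρ(𝔤) + ℂ·1, i.e. m = ρ(Y) + c₀·1 for some Y ∈ 𝔤 and c₀ ∈ ℂ. -/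
/-!
Taking the partial trace of the hypothesis against `ρ(Y)` in the second tensor factor, the trace
form and the dual basis collapse the first sum to `c·[ρ(Y), m]`, while the second sum lies in
`ρ(𝔤)`; hence `[ρ(Y), m] ∈ ρ(𝔤)` for every `Y`. As `ρ` is faithful, `Y ↦ ρ⁻¹[ρ(Y), m]` is a
derivation of `𝔤`, and derivations of a semisimple Lie algebra are inner:
`[ρ(Y), m] = [ρ(Y₀), ρ(Y)]`. Thus `m + ρ(Y₀)` commutes with `ρ(𝔤)`, and Schur's lemma makes it
scalar.
-/

open Kronecker

attribute [local instance 100] LieRing.ofAssociativeRing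

/-- `ρ` is an irreducible representation on `ℂ^d`: the only subspaces invariant under all
`ρ(X)` are `⊥` and `⊤`. -/
def MatIrreducible {L : Type*} {d : ℕ} (ρ : L → Matrix (Fin d) (Fin d) ℂ) : Prop :=
  ∀ W : Submodule ℂ (Fin d → ℂ), (∀ X : L, ∀ w ∈ W, (ρ X).mulVec w ∈ W) → W = ⊥ ∨ W = ⊤

open Matrix

namespace Matrix

variable {R n p : Type*} [CommSemiring R] [Fintype p]

def partialTraceMul (N : Matrix p p R) : Matrix (n × p) (n × p) R →ₗ[R] Matrix n n R where
  toFun M := of fun i j => ∑ k, ∑ l, M (i, k) (j, l) * N l k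
  map_add' M M' := by
    ext i j
    simp [add_mul, Finset.sum_add_distrib]
  map_smul' a M := by
    ext i j
    simp [Finset.mul_sum, mul_assoc]

theorem partialTraceMul_kronecker (N : Matrix p p R) (P : Matrix n n R) (Q : Matrix p p R) :
    partialTraceMul N (P ⊗ₖ Q) = trace (Q * N) • P := by
  ext i j
  simp only [partialTraceMul, LinearMap.coe_mk, AddHom.coe_mk, of_apply, kroneckerMap_apply,
    smul_apply, smul_eq_mul, trace, diag, mul_apply, Finset.sum_mul]
  exact Finset.sum_congr rfl fun k _ => Finset.sum_congr rfl fun l _ => by ring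

end Matrix

theorem Module.Basis.sum_bilinForm_smul_eq {R M ι : Type*} [CommSemiring R] [AddCommMonoid M]
    [Module R M] [Fintype ι] [DecidableEq ι] (B : LinearMap.BilinForm R M)
    (b : Module.Basis ι R M) (d : ι → M) (hd : ∀ i j, B (b i) (d j) = if i = j then 1 else 0)
    (x : M) : ∑ i, B x (d i) • b i = x := by
  have hrepr (i : ι) : B x (d i) = b.repr x i := by
    conv_lhs => rw [← b.sum_repr x]
    simp only [map_sum, map_smul, LinearMap.sum_apply, LinearMap.smul_apply, hd, smul_eq_mul,
      mul_ite, mul_one, mul_zero, Finset.sum_ite_eq', Finset.mem_univ, if_true]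
  simp only [hrepr, b.sum_repr]

section Casimir

variable {L n ι : Type*} [LieRing L] [Fintype n] [DecidableEq n] [Fintype ι] [DecidableEq ι]
  {d : ι → L}

theorem smul_lie_eq_neg_sum_of_sum_kronecker_eq_zero {R : Type*} [CommRing R] [LieAlgebra R L]
    {ρ : L →ₗ⁅R⁆ Matrix n n R} {B : LinearMap.BilinForm R L} {c : R} {b : Module.Basis ι R L}
    {m : Matrix n n R}
    (htr : ∀ X Y, trace (ρ X * ρ Y) = c * B X Y)
    (hd : ∀ i j, B (b i) (d j) = if i = j then 1 else 0)
    (hm : ∑ i, (⁅ρ (b i), m⁆ ⊗ₖ ρ (d i) + ρ (b i) ⊗ₖ ⁅ρ (d i), m⁆) = 0) (Y : L) :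
    c • ⁅ρ Y, m⁆ = -∑ i, trace (⁅ρ (d i), m⁆ * ρ Y) • ρ (b i) := by
  have h := congrArg (partialTraceMul (ρ Y)) hm
  simp only [map_sum, map_add, partialTraceMul_kronecker, map_zero, Finset.sum_add_distrib] at h
  have hfirst : ∑ i, trace (ρ (d i) * ρ Y) • ⁅ρ (b i), m⁆ = c • ⁅ρ Y, m⁆ := by
    simp only [trace_mul_comm (ρ (d _)), htr, mul_smul, ← Finset.smul_sum, ← smul_lie, ← sum_lie]
    conv_rhs => rw [← b.sum_bilinForm_smul_eq B d hd Y]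
    simp only [map_sum, map_smul]
  rw [hfirst] at h
  exact eq_neg_of_add_eq_zero_left h

theorem lie_mem_range_of_sum_kronecker_eq_zero {K : Type*} [Field K] [LieAlgebra K L]
    {ρ : L →ₗ⁅K⁆ Matrix n n K} {B : LinearMap.BilinForm K L} {c : K} (hc : c ≠ 0)
    {b : Module.Basis ι K L} {m : Matrix n n K}
    (htr : ∀ X Y, trace (ρ X * ρ Y) = c * B X Y)
    (hd : ∀ i j, B (b i) (d j) = if i = j then 1 else 0)
    (hm : ∑ i, (⁅ρ (b i), m⁆ ⊗ₖ ρ (d i) + ρ (b i) ⊗ₖ ⁅ρ (d i), m⁆) = 0) (Y : L) :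
    ⁅ρ Y, m⁆ ∈ ρ.range := by
  refine (ρ.mem_range _).2 ⟨-c⁻¹ • ∑ i, trace (⁅ρ (d i), m⁆ * ρ Y) • b i, ?_⟩
  have h := neg_eq_iff_eq_neg.2 (smul_lie_eq_neg_sum_of_sum_kronecker_eq_zero htr hd hm Y)
  simp only [neg_smul, map_neg, map_smul, map_sum, ← h, smul_neg, neg_neg, smul_smul,
    inv_mul_cancel₀ hc, one_smul]

end Casimir

theorem LieHom.exists_lie_add_eq_zero_of_lie_mem_range {K L L' : Type*} [Field K] [LieRing L]
    [LieAlgebra K L] [FiniteDimensional K L] [LieAlgebra.IsKilling K L] [LieRing L']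
    [LieAlgebra K L'] {f : L →ₗ⁅K⁆ L'} (hf : Function.Injective f) {x : L'}
    (hx : ∀ X, ⁅f X, x⁆ ∈ f.range) : ∃ Y, ∀ X, ⁅f X, x + f Y⁆ = 0 := by
  choose D hD using fun X => (f.mem_range _).1 (hx X)
  let δ : LieDerivation K L L :=
    { toFun := D
      map_add' := fun X X' => hf <| by simp only [hD, map_add, add_lie]
      map_smul' := fun a X => hf <| by simp only [hD, map_smul, smul_lie, RingHom.id_apply]
      leibniz' := fun X X' => hf <| by
        change f (D ⁅X, X'⁆) = f (⁅X, D X'⁆ - ⁅X', D X⁆)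
        simp only [hD, map_sub, LieHom.map_lie, leibniz_lie (f X), add_sub_cancel_right] }
  obtain ⟨Y, hY⟩ := LieDerivation.IsKilling.exists_eq_ad δ
  refine ⟨Y, fun X => ?_⟩
  have hDX : D X = ⁅Y, X⁆ := by
    rw [← LieAlgebra.ad_apply (R := K), ← LieDerivation.coe_ad_apply_eq_ad_apply, hY]
    rfl
  rw [lie_add, ← hD, hDX, LieHom.map_lie, ← lie_skew (f X), add_neg_cancel]

open Module.End in
theorem MatIrreducible.exists_eq_smul_one {L : Type*} {d : ℕ} {ρ : L → Matrix (Fin d) (Fin d) ℂ}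
    (hirr : MatIrreducible ρ) {M : Matrix (Fin d) (Fin d) ℂ} (hM : ∀ X, Commute (ρ X) M) :
    ∃ μ : ℂ, M = μ • 1 := by
  rcases isEmpty_or_nonempty (Fin d) with hd | hd
  · exact ⟨0, Subsingleton.elim _ _⟩
  obtain ⟨μ, hμ⟩ := exists_eigenvalue (toLin' M)
  have hinv : ∀ X, ∀ v ∈ eigenspace (toLin' M) μ, (ρ X).mulVec v ∈ eigenspace (toLin' M) μ := by
    intro X v hv
    rw [mem_eigenspace_iff, toLin'_apply] at hv ⊢
    rw [mulVec_mulVec, ← (hM X).eq, ← mulVec_mulVec, hv, mulVec_smul]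
  have htop := (hirr _ hinv).resolve_left hμ
  refine ⟨μ, toLin'.injective (LinearMap.ext fun v => ?_)⟩
  have hv : v ∈ eigenspace (toLin' M) μ := htop ▸ Submodule.mem_top
  rw [mem_eigenspace_iff] at hv
  rw [hv, map_smul, toLin'_one, LinearMap.smul_apply, LinearMap.id_apply]

theorem stmt_10_general {L : Type*} [LieRing L] [LieAlgebra ℂ L] [FiniteDimensional ℂ L]
    [LieAlgebra.IsSimple ℂ L]
    {d : ℕ} (ρ : L →ₗ⁅ℂ⁆ Matrix (Fin d) (Fin d) ℂ)
    (hρ : Function.Injective ρ)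
    (c : ℂ) (hc : c ≠ 0)
    (htr : ∀ X Y : L, Matrix.trace (ρ X * ρ Y) = c * killingForm ℂ L X Y)
    {ι : Type*} [Fintype ι] [DecidableEq ι] (Xb : Module.Basis ι ℂ L) (Xd : ι → L)
    (hdual : ∀ A B : ι, killingForm ℂ L (Xb A) (Xd B) = if A = B then 1 else 0)
    (hirr : MatIrreducible (fun X : L => ρ X))
    (m : Matrix (Fin d) (Fin d) ℂ)
    (hm : ∑ A : ι, ((ρ (Xb A) * m - m * ρ (Xb A)) ⊗ₖ ρ (Xd A) +
        ρ (Xb A) ⊗ₖ (ρ (Xd A) * m - m * ρ (Xd A))) = 0) :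
    ∃ (Y : L) (c₀ : ℂ), m = ρ Y + c₀ • (1 : Matrix (Fin d) (Fin d) ℂ) := by
  simp only [← Ring.lie_def] at hm
  obtain ⟨Y, hY⟩ := ρ.exists_lie_add_eq_zero_of_lie_mem_range hρ
    (lie_mem_range_of_sum_kronecker_eq_zero hc htr hdual hm)
  obtain ⟨μ, hμ⟩ := hirr.exists_eq_smul_one fun X => commute_iff_lie_eq.2 (hY X)
  exact ⟨-Y, μ, by rw [map_neg, eq_neg_add_iff_add_eq, add_comm, hμ]⟩

/-- if `ρ` is faithful irreducible and
`Σ_A ([ρ(X_A), m] ⊗ ρ(X^A) + ρ(X_A) ⊗ [ρ(X^A), m]) = 0`, then `m ∈ ρ(𝔤) + ℂ·1`. -/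
theorem stmt_10 {L : Type*} [LieRing L] [LieAlgebra ℂ L] [FiniteDimensional ℂ L]
    [LieAlgebra.IsSimple ℂ L]
    (hB : LinearMap.BilinForm.Nondegenerate (killingForm ℂ L))
    {d : ℕ} (ρ : L →ₗ⁅ℂ⁆ Matrix (Fin d) (Fin d) ℂ)
    (hρ : Function.Injective ρ)
    (c : ℂ) (hc : c ≠ 0)
    (htr : ∀ X Y : L, Matrix.trace (ρ X * ρ Y) = c * killingForm ℂ L X Y)
    {ι : Type*} [Fintype ι] [DecidableEq ι] (Xb : Module.Basis ι ℂ L) (Xd : ι → L)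
    (hdual : ∀ A B : ι, killingForm ℂ L (Xb A) (Xd B) = if A = B then 1 else 0)
    (hirr : MatIrreducible (fun X : L => ρ X))
    (m : Matrix (Fin d) (Fin d) ℂ)
    (hm : ∑ A : ι, ((ρ (Xb A) * m - m * ρ (Xb A)) ⊗ₖ ρ (Xd A) +
        ρ (Xb A) ⊗ₖ (ρ (Xd A) * m - m * ρ (Xd A))) = 0) :
    ∃ (Y : L) (c₀ : ℂ), m = ρ Y + c₀ • (1 : Matrix (Fin d) (Fin d) ℂ) :=
  stmt_10_general ρ hρ c hc htr Xb Xd hdual hirr m hm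
end

section
/- Let α : 𝔤 → 𝔤 be a Lie algebra involution with fixed subalgebra 𝔥 (on which the Killing form B is nondegenerate), ρ : 𝔤 → End(ℂ^d) a faithful representation with Tr(ρ(X)ρ(Y)) = c·B(X,Y), c ≠ 0, and let (X_a) be a basis of 𝔥 with B|𝔥-dual basis (X^a). Set C^{(𝔥)} := Σ_a ρ(X_a) ⊗ ρ(X^a) ∈ End(ℂ^d⊗ℂ^d). Decompose End(ℂ^d) = ρ(𝔥) ⊕ W̄ orthogonally for the trace form, and let k̃ ∈ End(ℂ^d) ⊗ End(ℂ^{d_B}) be written uniquely as k̃ = Σ_a ρ(X_a) ⊗ Z^a + Σ_i w̄_i ⊗ Z̄^i with (w̄_i) a trace-orthonormal basis of W̄. If k̃ satisfies 2·[C^{(𝔥)}₁₂, k̃₂₃] + [k̃₁₃, k̃₂₃] = 0 in End(ℂ^d ⊗ ℂ^d ⊗ ℂ^{d_B}), then: (i) the linear map φ : 𝔥 → End(ℂ^{d_B}) determined by φ(X^a) = (1/2)·Z^a is a Lie algebra homomorphism; (ii) [Z̄^i, Z^a] = 0 for all i, a; (iii) [Z̄^i, Z̄^j] = 0 for all i,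 j. -/
open Kronecker

attribute [local instance 100] LieRing.ofAssociativeRing

/-! Contract the first two legs of `2[C₁₂, k̃₂₃] + [k̃₁₃, k̃₂₃] = 0` against `v_j ⊗ v_l`, where
`(v_j) = (c⁻¹ρ(X^a), w̄_i)` is the trace-dual basis of `(ρ(X_a), w̄_i)`. The `k̃`-term becomes the
commutator of the `j`-th and `l`-th components of `k̃`. The `C`-term contains the factor
`tr(v_j ρ(X_b))`, so it vanishes when `v_j = w̄_i`, which makes `Z̄^i` commute with every
component; when `v_j = c⁻¹ρ(X^e)` and `v_l = c⁻¹ρ(X^f)`, invariance of the trace form turns it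
into `B([X^f, X^e], X_b)`, giving `[Z^e, Z^f] = 2 Σ_b B(X_b, [X^e, X^f]) Z^b`. These are the
bracket relations of `φ = ½ Σ_b B(X_b, ·) Z^b` on the dual basis `(X^a)`, which spans `𝔥`. -/

namespace Matrix

variable {R n m p ι κ : Type*} [CommRing R]

theorem trace_lie_mul_eq [Fintype n] (A B C : Matrix n n R) :
    trace (⁅A, B⁆ * C) = trace (A * ⁅B, C⁆) := by
  simp only [Ring.lie_def, sub_mul, mul_sub, trace_sub, mul_assoc]
  rw [trace_mul_comm B (A * C), mul_assoc]

theorem trace_sumElim_mul_sumElim [Fintype n] [DecidableEq ι] [DecidableEq κ]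
    {P P' : ι → Matrix n n R} {w : κ → Matrix n n R}
    (hP : ∀ a b, trace (P a * P' b) = if a = b then 1 else 0)
    (hPw : ∀ a i, trace (P a * w i) = 0) (hwP : ∀ i a, trace (w i * P' a) = 0)
    (hw : ∀ i k, trace (w i * w k) = if i = k then 1 else 0) (j l : ι ⊕ κ) :
    trace (Sum.elim P w j * Sum.elim P' w l) = if j = l then 1 else 0 := by
  rcases j with a | i <;> rcases l with b | k <;> simp [hP, hPw, hwP, hw]

theorem sum_kronecker {l : Type*} (s : Finset κ) (A : κ → Matrix n n R) (B : Matrix l l R) :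
    (∑ i ∈ s, A i) ⊗ₖ B = ∑ i ∈ s, A i ⊗ₖ B := by
  ext; simp [sum_apply, Finset.sum_mul]

/-- `contractLeft P T = tr₁((P ⊗ 1) T)`. -/
def contractLeft [Fintype p] (P : Matrix p p R) :
    Matrix (p × m) (p × m) R →ₗ[R] Matrix m m R where
  toFun T := of fun k l => ∑ x, ∑ y, P x y * T (y, k) (x, l)
  map_add' T U := by ext; simp [mul_add, Finset.sum_add_distrib]
  map_smul' t T := by ext; simp [Finset.mul_sum, mul_left_comm]

theorem contractLeft_kronecker [Fintype p] (P A : Matrix p p R) (Y : Matrix m m R) :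
    contractLeft P (A ⊗ₖ Y) = trace (P * A) • Y := by
  ext k l
  simp [contractLeft, trace, mul_apply, Finset.sum_mul, mul_assoc]

theorem contractLeft_kronecker_kronecker [Fintype n] (M N A B : Matrix n n R)
    (Y : Matrix m m R) :
    contractLeft (M ⊗ₖ N) ((A ⊗ₖ B) ⊗ₖ Y) = (trace (M * A) * trace (N * B)) • Y := by
  rw [contractLeft_kronecker, ← mul_kronecker_mul, trace_kronecker]

section Legs

variable [DecidableEq n] [Fintype ι]

/-- For `k = Σ_j u_j ⊗ Y_j`, `leg₁₃ u Y = k₁₃` and `leg₂₃ u Y = k₂₃`. -/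
def leg₁₃ (u : ι → Matrix n n R) (Y : ι → Matrix m m R) :
    Matrix ((n × n) × m) ((n × n) × m) R :=
  ∑ j, (u j ⊗ₖ 1) ⊗ₖ Y j

def leg₂₃ (u : ι → Matrix n n R) (Y : ι → Matrix m m R) :
    Matrix ((n × n) × m) ((n × n) × m) R :=
  ∑ j, (1 ⊗ₖ u j) ⊗ₖ Y j

variable [Fintype n] [Fintype m]

theorem contractLeft_lie_leg₁₃_leg₂₃ (M N : Matrix n n R) (u : ι → Matrix n n R)
    (Y : ι → Matrix m m R) :
    contractLeft (M ⊗ₖ N) ⁅leg₁₃ u Y, leg₂₃ u Y⁆ =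
      ∑ j, ∑ l, (trace (M * u j) * trace (N * u l)) • ⁅Y j, Y l⁆ := by
  simp only [leg₁₃, leg₂₃, Ring.lie_def, Finset.sum_mul, Finset.mul_sum, ← mul_kronecker_mul,
    Matrix.mul_one, Matrix.one_mul, map_sub, map_sum, contractLeft_kronecker_kronecker, smul_sub,
    Finset.sum_sub_distrib]
  rw [Finset.sum_comm (f := fun l j => _ • (Y l * Y j))]

theorem contractLeft_lie_kronecker_one_leg₂₃ [DecidableEq m] [Fintype κ] (M N : Matrix n n R)
    (P Q : κ → Matrix n n R) (u : ι → Matrix n n R) (Y : ι → Matrix m m R) :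
    contractLeft (M ⊗ₖ N) ⁅(∑ b, P b ⊗ₖ Q b) ⊗ₖ (1 : Matrix m m R), leg₂₃ u Y⁆ =
      ∑ b, ∑ l, (trace (M * P b) * trace (⁅N, Q b⁆ * u l)) • Y l := by
  simp only [trace_lie_mul_eq]
  simp only [leg₂₃, Ring.lie_def, Finset.sum_mul, Finset.mul_sum, ← mul_kronecker_mul,
    Matrix.mul_one, Matrix.one_mul, map_sub, map_sum, contractLeft_kronecker_kronecker,
    sum_kronecker, mul_sub, trace_sub, sub_smul, Finset.sum_sub_distrib]
  rw [Finset.sum_comm (f := fun l b => _ • Y l)]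

theorem lie_eq_of_two_smul_lie_add_lie_leg_eq_zero [DecidableEq m] [DecidableEq ι] [Fintype κ]
    {u v : ι → Matrix n n R} (hvu : ∀ j l, trace (v j * u l) = if j = l then 1 else 0)
    (P Q : κ → Matrix n n R) (Y : ι → Matrix m m R)
    (h : (2 : R) • ⁅(∑ b, P b ⊗ₖ Q b) ⊗ₖ (1 : Matrix m m R), leg₂₃ u Y⁆ +
      ⁅leg₁₃ u Y, leg₂₃ u Y⁆ = 0) (j l : ι) :
    ⁅Y j, Y l⁆ = -(2 : R) • ∑ b, ∑ i, (trace (v j * P b) * trace (⁅v l, Q b⁆ * u i)) • Y i := by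
  have h' := congrArg (contractLeft (v j ⊗ₖ v l)) h
  rw [map_add, map_smul, contractLeft_lie_kronecker_one_leg₂₃, contractLeft_lie_leg₁₃_leg₂₃,
    map_zero] at h'
  simp only [hvu, ite_mul, one_mul, zero_mul, ite_smul, zero_smul, one_smul, Finset.sum_ite_irrel,
    Finset.sum_const_zero, Finset.sum_ite_eq, Finset.mem_univ, if_true] at h'
  rw [neg_smul, eq_neg_iff_add_eq_zero, add_comm]
  exact h'

end Legs

end Matrix

open Submodule in
theorem LinearMap.map_lie_of_mem_span {R L A : Type*} [CommRing R] [LieRing L] [LieAlgebra R L]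
    [LieRing A] [LieAlgebra R A] (φ : L →ₗ[R] A) {s : Set L}
    (h : ∀ x ∈ s, ∀ y ∈ s, φ ⁅x, y⁆ = ⁅φ x, φ y⁆) {x y : L} (hx : x ∈ span R s)
    (hy : y ∈ span R s) : φ ⁅x, y⁆ = ⁅φ x, φ y⁆ := by
  induction hx using span_induction with
  | mem x hx =>
    induction hy using span_induction with
    | mem y hy => exact h x hx y hy
    | zero => simp
    | add y z _ _ hy hz => simp [lie_add, hy, hz]
    | smul r y _ hy => simp [hy]
  | zero => simp
  | add x z _ _ hx hz => simp [add_lie, hx, hz]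
  | smul r x _ hx => simp [hx]

section Dual

variable {K V ι : Type*} [Field K] [AddCommGroup V] [Module K V] [Fintype ι] [DecidableEq ι]
  {B : LinearMap.BilinForm K V} {e f : ι → V}

theorem linearIndependent_of_dual (hdual : ∀ a b, B (e a) (f b) = if a = b then 1 else 0) :
    LinearIndependent K f := by
  rw [Fintype.linearIndependent_iff]
  intro g hg b
  simpa [hdual] using congrArg (B (e b)) hg

theorem span_range_eq_of_dual (hdual : ∀ a b, B (e a) (f b) = if a = b then 1 else 0)
    (hf : ∀ b, f b ∈ Submodule.span K (Set.range e)) :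
    Submodule.span K (Set.range f) = Submodule.span K (Set.range e) := by
  have := FiniteDimensional.span_of_finite K (Set.finite_range e)
  refine Submodule.eq_of_le_of_finrank_le (Submodule.span_le.mpr (Set.range_subset_iff.mpr hf)) ?_
  rw [finrank_span_eq_card (linearIndependent_of_dual hdual)]
  exact finrank_range_le_card e

end Dual

theorem exists_linearMap_map_lie_of_dual {K L A ι : Type*} [Field K] [LieRing L]
    [LieAlgebra K L] [LieRing A] [LieAlgebra K A] [Fintype ι] [DecidableEq ι]
    {B : LinearMap.BilinForm K L} {e f : ι → L}
    (hdual : ∀ a b, B (e a) (f b) = if a = b then 1 else 0)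
    (hf : ∀ b, f b ∈ Submodule.span K (Set.range e)) (W : ι → A)
    (hW : ∀ a b, ⁅W a, W b⁆ = ∑ c, B (e c) ⁅f a, f b⁆ • W c) :
    ∃ φ : L →ₗ[K] A, (∀ a, φ (f a) = W a) ∧
      ∀ x ∈ Submodule.span K (Set.range e), ∀ y ∈ Submodule.span K (Set.range e),
        φ ⁅x, y⁆ = ⁅φ x, φ y⁆ := by
  set φ : L →ₗ[K] A := ∑ a, (B (e a)).smulRight (W a)
  have hφ (x : L) : φ x = ∑ a, B (e a) x • W a := by simp [φ]
  have hφf (b : ι) : φ (f b) = W b := by simp [hφ, hdual]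
  refine ⟨φ, hφf, ?_⟩
  rw [← span_range_eq_of_dual hdual hf]
  refine fun x hx y hy => φ.map_lie_of_mem_span ?_ hx hy
  rintro _ ⟨a, rfl⟩ _ ⟨b, rfl⟩
  rw [hφf, hφf, hW, hφ]

open Matrix

theorem stmt_18_general {L : Type*} [LieRing L] [LieAlgebra ℂ L]
    (α : L →ₗ⁅ℂ⁆ L)
    {d dB : ℕ} (ρ : L →ₗ⁅ℂ⁆ Matrix (Fin d) (Fin d) ℂ)
    (c : ℂ) (hc : c ≠ 0)
    (htr : ∀ X Y : L, Matrix.trace (ρ X * ρ Y) = c * killingForm ℂ L X Y)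
    -- a basis of the fixed subalgebra 𝔥 together with its `B|𝔥`-dual basis
    {ιh : Type*} [Fintype ιh] [DecidableEq ιh] (Xa : ιh → L) (Xd : ιh → L)
    (hXafix : ∀ a, α (Xa a) = Xa a) (hXdfix : ∀ a, α (Xd a) = Xd a)
    (hspan : ∀ X : L, α X = X ↔ X ∈ Submodule.span ℂ (Set.range Xa))
    (hdual : ∀ a b : ιh, killingForm ℂ L (Xa a) (Xd b) = if a = b then 1 else 0)
    -- a trace-orthonormal basis of the trace-orthocomplement `W̄` of `ρ(𝔥)` in `End(ℂ^d)`
    {ιw : Type*} [Fintype ιw] [DecidableEq ιw] (wbar : ιw → Matrix (Fin d) (Fin d) ℂ)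
    (horth : ∀ (i : ιw) (X : L), α X = X → Matrix.trace (ρ X * wbar i) = 0)
    (honb : ∀ i j : ιw, Matrix.trace (wbar i * wbar j) = if i = j then 1 else 0)
    -- the components of `k̃` in End(ℂ^{d_B})
    (Z : ιh → Matrix (Fin dB) (Fin dB) ℂ) (Zbar : ιw → Matrix (Fin dB) (Fin dB) ℂ)
    -- the hypothesis `2[C^{(𝔥)}₁₂, k̃₂₃] + [k̃₁₃, k̃₂₃] = 0`
    (hmain :
      (2 : ℂ) • (((∑ a : ιh, ρ (Xa a) ⊗ₖ ρ (Xd a)) ⊗ₖ (1 : Matrix (Fin dB) (Fin dB) ℂ)) *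
            (∑ a : ιh, ((1 : Matrix (Fin d) (Fin d) ℂ) ⊗ₖ ρ (Xa a)) ⊗ₖ Z a +
              ∑ i : ιw, ((1 : Matrix (Fin d) (Fin d) ℂ) ⊗ₖ wbar i) ⊗ₖ Zbar i) -
          (∑ a : ιh, ((1 : Matrix (Fin d) (Fin d) ℂ) ⊗ₖ ρ (Xa a)) ⊗ₖ Z a +
              ∑ i : ιw, ((1 : Matrix (Fin d) (Fin d) ℂ) ⊗ₖ wbar i) ⊗ₖ Zbar i) *
            ((∑ a : ιh, ρ (Xa a) ⊗ₖ ρ (Xd a)) ⊗ₖ (1 : Matrix (Fin dB) (Fin dB) ℂ))) +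
        ((∑ a : ιh, (ρ (Xa a) ⊗ₖ (1 : Matrix (Fin d) (Fin d) ℂ)) ⊗ₖ Z a +
              ∑ i : ιw, (wbar i ⊗ₖ (1 : Matrix (Fin d) (Fin d) ℂ)) ⊗ₖ Zbar i) *
            (∑ a : ιh, ((1 : Matrix (Fin d) (Fin d) ℂ) ⊗ₖ ρ (Xa a)) ⊗ₖ Z a +
              ∑ i : ιw, ((1 : Matrix (Fin d) (Fin d) ℂ) ⊗ₖ wbar i) ⊗ₖ Zbar i) -
          (∑ a : ιh, ((1 : Matrix (Fin d) (Fin d) ℂ) ⊗ₖ ρ (Xa a)) ⊗ₖ Z a +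
              ∑ i : ιw, ((1 : Matrix (Fin d) (Fin d) ℂ) ⊗ₖ wbar i) ⊗ₖ Zbar i) *
            (∑ a : ιh, (ρ (Xa a) ⊗ₖ (1 : Matrix (Fin d) (Fin d) ℂ)) ⊗ₖ Z a +
              ∑ i : ιw, (wbar i ⊗ₖ (1 : Matrix (Fin d) (Fin d) ℂ)) ⊗ₖ Zbar i)) = 0) :
    (∃ φ : L →ₗ[ℂ] Matrix (Fin dB) (Fin dB) ℂ,
      (∀ a : ιh, φ (Xd a) = (1 / 2 : ℂ) • Z a) ∧
        (∀ X Y : L, α X = X → α Y = Y → φ ⁅X, Y⁆ = φ X * φ Y - φ Y * φ X)) ∧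
      (∀ (i : ιw) (a : ιh), Zbar i * Z a = Z a * Zbar i) ∧
      (∀ i j : ιw, Zbar i * Zbar j = Zbar j * Zbar i) := by
  set u : ιh ⊕ ιw → Matrix (Fin d) (Fin d) ℂ := Sum.elim (fun a => ρ (Xa a)) wbar
  set v : ιh ⊕ ιw → Matrix (Fin d) (Fin d) ℂ := Sum.elim (fun a => c⁻¹ • ρ (Xd a)) wbar
  set z : ιh ⊕ ιw → Matrix (Fin dB) (Fin dB) ℂ := Sum.elim Z Zbar
  have hvu : ∀ j l, trace (v j * u l) = if j = l then 1 else 0 :=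
    trace_sumElim_mul_sumElim
      (fun a b => by simp [htr, LieModule.traceForm_comm ℂ L L (Xd a), hdual, hc, eq_comm])
      (fun a i => by simp [horth i _ (hXdfix a)])
      (fun i a => by rw [trace_mul_comm]; exact horth i _ (hXafix a)) honb
  have hleg : (2 : ℂ) • ⁅(∑ a, ρ (Xa a) ⊗ₖ ρ (Xd a)) ⊗ₖ (1 : Matrix (Fin dB) (Fin dB) ℂ),
      leg₂₃ u z⁆ + ⁅leg₁₃ u z, leg₂₃ u z⁆ = 0 := by
    simpa only [leg₁₃, leg₂₃, Fintype.sum_sum_type, Ring.lie_def, u, z, Sum.elim_inl,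
      Sum.elim_inr] using hmain
  have hlie := lie_eq_of_two_smul_lie_add_lie_leg_eq_zero hvu (fun a => u (.inl a))
    (fun a => ρ (Xd a)) z hleg
  have hZbar (i : ιw) (j : ιh ⊕ ιw) : ⁅Zbar i, z j⁆ = 0 := by simpa [hvu, z] using hlie (.inr i) j
  have hpair (X : L) (hX : α X = X) :
      ∑ j, trace (ρ X * u j) • z j = c • ∑ a, killingForm ℂ L X (Xa a) • Z a := by
    simp [u, z, Fintype.sum_sum_type, htr, horth _ X hX, Finset.smul_sum, smul_smul]
  have hZ (e f : ιh) : ⁅(1 / 2 : ℂ) • Z e, (1 / 2 : ℂ) • Z f⁆ =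
      ∑ b, killingForm ℂ L (Xa b) ⁅Xd e, Xd f⁆ • (1 / 2 : ℂ) • Z b := by
    have hfix : α ⁅Xd f, Xd e⁆ = ⁅Xd f, Xd e⁆ := by rw [LieHom.map_lie, hXdfix, hXdfix]
    have h : ⁅Z e, Z f⁆ = _ := hlie (.inl e) (.inl f)
    simp only [hvu, Sum.inl.injEq, ite_mul, one_mul, zero_mul, ite_smul, zero_smul,
      Finset.sum_ite_irrel, Finset.sum_const_zero, Finset.sum_ite_eq, Finset.mem_univ, if_true] at h
    simp only [v, Sum.elim_inl, smul_lie, ← LieHom.map_lie, smul_mul_assoc, trace_smul,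
      smul_eq_mul, mul_smul, ← Finset.smul_sum, hpair _ hfix, inv_smul_smul₀ hc] at h
    rw [smul_lie, lie_smul, h, ← lie_skew (Xd e)]
    simp only [smul_smul, Finset.smul_sum]
    refine Finset.sum_congr rfl fun b _ => ?_
    rw [map_neg, LieModule.traceForm_comm ℂ L L _ (Xa b)]
    module
  obtain ⟨φ, hφd, hφ⟩ :=
    exists_linearMap_map_lie_of_dual hdual (fun b => (hspan _).1 (hXdfix b)) _ hZ
  refine ⟨⟨φ, hφd, fun X Y hX hY => ?_⟩, fun i a => ?_, fun i j => ?_⟩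
  · rw [← Ring.lie_def]
    exact hφ X ((hspan X).1 hX) Y ((hspan Y).1 hY)
  · exact (commute_iff_lie_eq.mpr (hZbar i (.inl a))).eq
  · exact (commute_iff_lie_eq.mpr (hZbar i (.inr j))).eq

/-- let `α` be an involution with fixed subalgebra `𝔥` (with `B|𝔥`
nondegenerate), `(X_a)` a basis of `𝔥` with `B|𝔥`-dual basis `(X^a)`,
`C^{(𝔥)} = Σ_a ρ(X_a) ⊗ ρ(X^a)`, and `k̃ = Σ_a ρ(X_a)⊗Z^a + Σ_i w̄_i⊗Z̄^i` with `(w̄_i)` a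
trace-orthonormal basis of the trace-orthocomplement `W̄` of `ρ(𝔥)`. If
`2[C^{(𝔥)}₁₂, k̃₂₃] + [k̃₁₃, k̃₂₃] = 0`, then `X^a ↦ (1/2)Z^a` extends to a Lie algebra
homomorphism of `𝔥`, and the `Z̄^i` commute with the `Z^a` and with each other. -/
theorem stmt_18 {L : Type*} [LieRing L] [LieAlgebra ℂ L] [FiniteDimensional ℂ L]
    [LieAlgebra.IsSimple ℂ L]
    (hB : LinearMap.BilinForm.Nondegenerate (killingForm ℂ L))
    (α : L →ₗ⁅ℂ⁆ L) (hα : ∀ X : L, α (α X) = X)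
    {d dB : ℕ} (ρ : L →ₗ⁅ℂ⁆ Matrix (Fin d) (Fin d) ℂ)
    (hρ : Function.Injective ρ)
    (c : ℂ) (hc : c ≠ 0)
    (htr : ∀ X Y : L, Matrix.trace (ρ X * ρ Y) = c * killingForm ℂ L X Y)
    -- a basis of the fixed subalgebra 𝔥 together with its `B|𝔥`-dual basis
    {ιh : Type*} [Fintype ιh] [DecidableEq ιh] (Xa : ιh → L) (Xd : ιh → L)
    (hXafix : ∀ a, α (Xa a) = Xa a) (hXdfix : ∀ a, α (Xd a) = Xd a)
    (hindep : LinearIndependent ℂ Xa)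
    (hspan : ∀ X : L, α X = X ↔ X ∈ Submodule.span ℂ (Set.range Xa))
    (hdual : ∀ a b : ιh, killingForm ℂ L (Xa a) (Xd b) = if a = b then 1 else 0)
    -- a trace-orthonormal basis of the trace-orthocomplement `W̄` of `ρ(𝔥)` in `End(ℂ^d)`
    {ιw : Type*} [Fintype ιw] [DecidableEq ιw] (wbar : ιw → Matrix (Fin d) (Fin d) ℂ)
    (horth : ∀ (i : ιw) (X : L), α X = X → Matrix.trace (ρ X * wbar i) = 0)
    (honb : ∀ i j : ιw, Matrix.trace (wbar i * wbar j) = if i = j then 1 else 0)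
    (hcompl : Submodule.span ℂ (Set.range (fun a => ρ (Xa a)) ∪ Set.range wbar) = ⊤)
    -- the components of `k̃` in End(ℂ^{d_B})
    (Z : ιh → Matrix (Fin dB) (Fin dB) ℂ) (Zbar : ιw → Matrix (Fin dB) (Fin dB) ℂ)
    -- the hypothesis `2[C^{(𝔥)}₁₂, k̃₂₃] + [k̃₁₃, k̃₂₃] = 0`
    (hmain :
      (2 : ℂ) • (((∑ a : ιh, ρ (Xa a) ⊗ₖ ρ (Xd a)) ⊗ₖ (1 : Matrix (Fin dB) (Fin dB) ℂ)) *
            (∑ a : ιh, ((1 : Matrix (Fin d) (Fin d) ℂ) ⊗ₖ ρ (Xa a)) ⊗ₖ Z a +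
              ∑ i : ιw, ((1 : Matrix (Fin d) (Fin d) ℂ) ⊗ₖ wbar i) ⊗ₖ Zbar i) -
          (∑ a : ιh, ((1 : Matrix (Fin d) (Fin d) ℂ) ⊗ₖ ρ (Xa a)) ⊗ₖ Z a +
              ∑ i : ιw, ((1 : Matrix (Fin d) (Fin d) ℂ) ⊗ₖ wbar i) ⊗ₖ Zbar i) *
            ((∑ a : ιh, ρ (Xa a) ⊗ₖ ρ (Xd a)) ⊗ₖ (1 : Matrix (Fin dB) (Fin dB) ℂ))) +
        ((∑ a : ιh, (ρ (Xa a) ⊗ₖ (1 : Matrix (Fin d) (Fin d) ℂ)) ⊗ₖ Z a +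
              ∑ i : ιw, (wbar i ⊗ₖ (1 : Matrix (Fin d) (Fin d) ℂ)) ⊗ₖ Zbar i) *
            (∑ a : ιh, ((1 : Matrix (Fin d) (Fin d) ℂ) ⊗ₖ ρ (Xa a)) ⊗ₖ Z a +
              ∑ i : ιw, ((1 : Matrix (Fin d) (Fin d) ℂ) ⊗ₖ wbar i) ⊗ₖ Zbar i) -
          (∑ a : ιh, ((1 : Matrix (Fin d) (Fin d) ℂ) ⊗ₖ ρ (Xa a)) ⊗ₖ Z a +
              ∑ i : ιw, ((1 : Matrix (Fin d) (Fin d) ℂ) ⊗ₖ wbar i) ⊗ₖ Zbar i) *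
            (∑ a : ιh, (ρ (Xa a) ⊗ₖ (1 : Matrix (Fin d) (Fin d) ℂ)) ⊗ₖ Z a +
              ∑ i : ιw, (wbar i ⊗ₖ (1 : Matrix (Fin d) (Fin d) ℂ)) ⊗ₖ Zbar i)) = 0) :
    (∃ φ : L →ₗ[ℂ] Matrix (Fin dB) (Fin dB) ℂ,
      (∀ a : ιh, φ (Xd a) = (1 / 2 : ℂ) • Z a) ∧
        (∀ X Y : L, α X = X → α Y = Y → φ ⁅X, Y⁆ = φ X * φ Y - φ Y * φ X)) ∧
      (∀ (i : ιw) (a : ιh), Zbar i * Z a = Z a * Zbar i) ∧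
      (∀ i j : ιw, Zbar i * Zbar j = Zbar j * Zbar i) :=
  stmt_18_general α ρ c hc htr Xa Xd hXafix hXdfix hspan hdual wbar horth honb Z Zbar hmain
end
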